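/- arXiv:1903.04148 — 2 statements merged into one kernel-verified Lean document; each statement's English description precedes it below -/
import Mathlib

section
/- If a spherically convex body C ⊂ S^d satisfies Δ(C) = diam(C) and this common value is at most π/2, then C is a body of constant width w = Δ(C) = diam(C), i.e. width_K(C) = w for every hemisphere K supporting C. -/
open scoped RealInnerProductSpace

noncomputable section

namespace SphericalGeom

/-- Euclidean space `E^n`. -/
abbrev Esp (n : ℕ) : Type := EuclideanSpace ℝ (Fin n)

/-- The unit sphere centered at the origin of `E^n` (so `S^d` for `n = d+1`). -/
def unitSphere (n : ℕ) : Set (Esp n) := Metric.sphere 0 1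

/-- Spherical (geodesic) distance between points of the unit sphere. -/
def sdist {n : ℕ} (a b : Esp n) : ℝ := Real.arccos ⟪a, b⟫

/-- The hemisphere `H(c)` with center `c`: points of the sphere within spherical
distance `π/2` from `c`. -/
def hemi {n : ℕ} (c : Esp n) : Set (Esp n) :=
  {x ∈ unitSphere n | sdist c x ≤ Real.pi / 2}

/-- The boundary great subsphere of the hemisphere centered at `c`. -/
def hemiBd {n : ℕ} (c : Esp n) : Set (Esp n) :=
  {x ∈ unitSphere n | sdist c x = Real.pi / 2}

/-- The spherical arc connecting `a` and `b` (for non-antipodal `a b` of the sphere,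
this is the shorter great-circle arc joining them). -/
def arc {n : ℕ} (a b : Esp n) : Set (Esp n) :=
  {z | ∃ s t : ℝ, 0 ≤ s ∧ 0 ≤ t ∧ s • a + t • b ≠ 0 ∧
    z = ‖s • a + t • b‖⁻¹ • (s • a + t • b)}

/-- A subset of the sphere, containing no pair of antipodes, which together with
every two of its points contains the arc connecting them. -/
def IsSphConvex {n : ℕ} (C : Set (Esp n)) : Prop :=
  C ⊆ unitSphere n ∧ (∀ x ∈ C, -x ∉ C) ∧ ∀ a ∈ C, ∀ b ∈ C, arc a b ⊆ C

/-- A spherically convex body: a closed spherically convex set with nonempty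
interior relative to the sphere. -/
def IsSphConvexBody {n : ℕ} (C : Set (Esp n)) : Prop :=
  IsClosed C ∧ IsSphConvex C ∧
    ∃ x ∈ C, ∃ ε : ℝ, 0 < ε ∧ Metric.ball x ε ∩ unitSphere n ⊆ C

/-- The hemisphere centered at `k` supports `C`: it contains `C` and its boundary
meets `C`. -/
def Supports {n : ℕ} (k : Esp n) (C : Set (Esp n)) : Prop :=
  k ∈ unitSphere n ∧ C ⊆ hemi k ∧ ∃ p ∈ C, sdist k p = Real.pi / 2

/-- The hemispheres centered at `g` and `h` are different and not opposite, so that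
`H(g) ∩ H(h)` is a lune. -/
def IsLunePair {n : ℕ} (g h : Esp n) : Prop :=
  g ∈ unitSphere n ∧ h ∈ unitSphere n ∧ g ≠ h ∧ g ≠ -h

/-- The center of the bounding `(d-1)`-dimensional hemisphere `H(g)/H(h)` of the
lune `H(g) ∩ H(h)`: the normalized projection of `h` onto the hyperplane `g^⊥`. -/
def luneFaceCenter {n : ℕ} (g h : Esp n) : Esp n :=
  ‖h - ⟪g, h⟫ • g‖⁻¹ • (h - ⟪g, h⟫ • g)

/-- The thickness of the lune `H(g) ∩ H(h)`: the spherical distance between the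
centers of its two bounding hemispheres. -/
def luneThickness {n : ℕ} (g h : Esp n) : ℝ :=
  sdist (luneFaceCenter g h) (luneFaceCenter h g)

/-- The set of corners of the lune `H(g) ∩ H(h)`, i.e. `(G/H) ∩ (H/G)`. -/
def luneCorners {n : ℕ} (g h : Esp n) : Set (Esp n) := hemiBd g ∩ hemiBd h

/-- The width of `C` determined by the supporting hemisphere `H(k)`: the minimum
thickness of a lune `H(k) ∩ K'` over all hemispheres `K' ≠ H(k)` supporting `C`. -/
def widthAt {n : ℕ} (C : Set (Esp n)) (k : Esp n) : ℝ :=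
  sInf {t | ∃ k', Supports k' C ∧ k' ≠ k ∧ k' ≠ -k ∧ t = luneThickness k k'}

/-- The thickness `Δ(C)`: the minimum of `width_K(C)` over supporting hemispheres. -/
def thickness {n : ℕ} (C : Set (Esp n)) : ℝ :=
  sInf {t | ∃ k, Supports k C ∧ t = widthAt C k}

/-- The spherical diameter: the maximum spherical distance of two points of `C`. -/
def sdiam {n : ℕ} (C : Set (Esp n)) : ℝ :=
  sSup {t | ∃ p ∈ C, ∃ q ∈ C, t = sdist p q}

/-- `C` is of constant width `w`. -/
def IsConstWidth {n : ℕ} (C : Set (Esp n)) (w : ℝ) : Prop :=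
  ∀ k, Supports k C → widthAt C k = w

/-- A reduced body: every convex body properly contained in it has strictly
smaller thickness. -/
def IsReduced {n : ℕ} (R : Set (Esp n)) : Prop :=
  IsSphConvexBody R ∧ ∀ Z : Set (Esp n), IsSphConvexBody Z → Z ⊆ R → Z ≠ R →
    thickness Z < thickness R

/-- `e` is an extreme point of the convex body `C`: `C \ {e}` is convex. -/
def IsExtremePt {n : ℕ} (C : Set (Esp n)) (e : Esp n) : Prop :=
  e ∈ C ∧ IsSphConvex (C \ {e})

/-- The boundary of `C` relative to the sphere. -/
def sphBoundary {n : ℕ} (C : Set (Esp n)) : Set (Esp n) :=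
  closure C ∩ closure (unitSphere n \ C)

/-- `D` is of constant diameter `δ`: its diameter equals `δ` and every boundary
point realizes the distance `δ` to some boundary point. -/
def IsConstDiameter {n : ℕ} (D : Set (Esp n)) (δ : ℝ) : Prop :=
  sdiam D = δ ∧ ∀ p ∈ sphBoundary D, ∃ p' ∈ sphBoundary D, sdist p p' = δ

end SphericalGeom

open SphericalGeom Real
open Filter Topology

/-!
Let `H(k)` support `C` at `p`, and let `w = diam C ≤ π/2`. Turn the center `-k` towards `p` along
the great circle `k_θ = cos θ • (-k) + sin θ • p`; the lune `H(k) ∩ H(k_θ)` has thickness `θ`.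
Every `x ∈ C` is within `w` of `p`, so `⟪p, x⟫ ≥ cos w`, and then Bessel's inequality gives
`⟪k, x⟫ ≤ sin w`: hence `C ⊆ H(k_w)`. On the other hand `H(k_0) = H(-k)` misses the interior of `C`.
The intermediate value theorem, applied to `θ ↦ min_{x ∈ C} ⟪k_θ, x⟫`, yields `θ ∈ (0, w]` for which
`H(k_θ)` supports `C`, so `width_K(C) ≤ θ ≤ diam C = Δ(C) ≤ width_K(C)`.
-/

theorem IsCompact.exists_mem_Ioc_isMinOn_eq_zero {β : Type*} [TopologicalSpace β] {K : Set β}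
    (hK : IsCompact K) {f : ℝ → β → ℝ} (hf : Continuous ↿f) {a b : ℝ} (hab : a ≤ b)
    (ha : ∃ x ∈ K, f a x < 0) (hb : ∀ x ∈ K, 0 ≤ f b x) :
    ∃ θ ∈ Set.Ioc a b, ∃ x ∈ K, IsMinOn (f θ) K x ∧ f θ x = 0 := by
  obtain ⟨x₀, hx₀, hfx₀⟩ := ha
  have hKne : K.Nonempty := ⟨x₀, hx₀⟩
  have hcont : Continuous fun θ => sInf (f θ '' K) := hK.continuous_sInf hf
  have hfθ (θ : ℝ) : IsCompact (f θ '' K) := hK.image (hf.comp (.prodMk_right θ))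
  have hmin_a : sInf (f a '' K) < 0 :=
    (csInf_le (hfθ a).bddBelow (Set.mem_image_of_mem _ hx₀)).trans_lt hfx₀
  have hmin_b : 0 ≤ sInf (f b '' K) :=
    le_csInf (hKne.image _) (Set.forall_mem_image.2 hb)
  obtain ⟨θ, hθ, hθ0⟩ :=
    intermediate_value_Ioc hab hcont.continuousOn ⟨hmin_a, hmin_b⟩
  obtain ⟨x, hx, hfx⟩ := (hfθ θ).sInf_mem (hKne.image _)
  refine ⟨θ, hθ, x, hx, isMinOn_iff.2 fun y hy => ?_, hfx.trans hθ0⟩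
  rw [hfx]
  exact csInf_le (hfθ θ).bddBelow (Set.mem_image_of_mem _ hy)

namespace SphericalGeom

section InnerProduct

variable {E : Type*} [NormedAddCommGroup E] [InnerProductSpace ℝ E]

def greatCircle (u v : E) (θ : ℝ) : E := cos θ • u + sin θ • v

theorem inner_greatCircle_left (u v x : E) (θ : ℝ) :
    ⟪greatCircle u v θ, x⟫ = cos θ * ⟪u, x⟫ + sin θ * ⟪v, x⟫ := by
  simp only [greatCircle, inner_add_left, real_inner_smul_left]

theorem continuous_greatCircle (u v : E) : Continuous (greatCircle u v) := by
  unfold greatCircle; fun_prop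

theorem norm_greatCircle {u v : E} (hu : ‖u‖ = 1) (hv : ‖v‖ = 1) (huv : ⟪u, v⟫ = 0) (θ : ℝ) :
    ‖greatCircle u v θ‖ = 1 := by
  have h : ‖greatCircle u v θ‖ ^ 2 = 1 := by
    rw [greatCircle, norm_add_sq_real, real_inner_smul_left, real_inner_smul_right, huv,
      norm_smul, norm_smul, hu, hv, Real.norm_eq_abs, Real.norm_eq_abs]
    nlinarith [sq_abs (cos θ), sq_abs (sin θ), sin_sq_add_cos_sq θ]
  exact (pow_eq_one_iff_of_nonneg (norm_nonneg _) two_ne_zero).1 h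

theorem inner_sq_add_inner_sq_le {u v : E} (hu : ‖u‖ = 1) (hv : ‖v‖ = 1) (huv : ⟪u, v⟫ = 0)
    (x : E) : ⟪u, x⟫ ^ 2 + ⟪v, x⟫ ^ 2 ≤ ‖x‖ ^ 2 := by
  have hon : Orthonormal ℝ ![u, v] := by
    rw [orthonormal_iff_ite]
    intro i j
    fin_cases i <;> fin_cases j <;>
      simp [hu, hv, huv, real_inner_comm u v]
  simpa [Fin.sum_univ_two] using hon.sum_inner_products_le (s := Finset.univ) x

theorem inner_le_sin_of_cos_le_inner {u v x : E} (hu : ‖u‖ = 1) (hv : ‖v‖ = 1)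
    (huv : ⟪u, v⟫ = 0) (hx : ‖x‖ = 1) {w : ℝ} (hw₀ : 0 ≤ w) (hw : w ≤ π / 2)
    (hvx : cos w ≤ ⟪v, x⟫) :
    cos w * ⟪u, x⟫ ≤ sin w * ⟪v, x⟫ := by
  have hbessel := inner_sq_add_inner_sq_le hu hv huv x
  have hcos : 0 ≤ cos w := cos_nonneg_of_mem_Icc ⟨by linarith [pi_pos], hw⟩
  have hsin : 0 ≤ sin w := sin_nonneg_of_nonneg_of_le_pi hw₀ (by linarith)
  have hux_le : ⟪u, x⟫ ≤ sin w := by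
    nlinarith [sin_sq_add_cos_sq w]
  nlinarith

end InnerProduct

variable {n : ℕ}

theorem mem_unitSphere_iff {x : Esp n} : x ∈ unitSphere n ↔ ‖x‖ = 1 := by
  simp [unitSphere]

theorem sdist_le_pi_div_two_iff {a b : Esp n} : sdist a b ≤ π / 2 ↔ 0 ≤ ⟪a, b⟫ :=
  arccos_le_pi_div_two

theorem sdist_eq_pi_div_two_iff {a b : Esp n} : sdist a b = π / 2 ↔ ⟪a, b⟫ = 0 :=
  arccos_eq_pi_div_two

theorem cos_le_inner_of_sdist_le {a b : Esp n} (ha : ‖a‖ = 1) (hb : ‖b‖ = 1) {w : ℝ}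
    (hab : sdist a b ≤ w) (hw : w ≤ π) : cos w ≤ ⟪a, b⟫ := by
  have hbound := abs_le.1 ((abs_real_inner_le_norm a b).trans_eq (by rw [ha, hb, one_mul]))
  calc cos w ≤ cos (sdist a b) := cos_le_cos_of_nonneg_of_le_pi (arccos_nonneg _) hw hab
    _ = ⟪a, b⟫ := cos_arccos hbound.1 hbound.2

theorem sdist_le_sdiam {C : Set (Esp n)} {p q : Esp n} (hp : p ∈ C) (hq : q ∈ C) :
    sdist p q ≤ sdiam C :=
  le_csSup ⟨π, by rintro t ⟨a, -, b, -, rfl⟩; exact arccos_le_pi _⟩ ⟨p, hp, q, hq, rfl⟩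

theorem sdiam_nonneg (C : Set (Esp n)) : 0 ≤ sdiam C :=
  Real.sSup_nonneg <| by rintro t ⟨a, -, b, -, rfl⟩; exact arccos_nonneg _

theorem inner_luneFaceCenter {g h : Esp n} (hg : ‖g‖ = 1) (hh : ‖h‖ = 1)
    (hgh : ⟪g, h⟫ ^ 2 < 1) : ⟪luneFaceCenter g h, luneFaceCenter h g⟫ = -⟪g, h⟫ := by
  have hproj {u v : Esp n} (hu : ‖u‖ = 1) (hv : ‖v‖ = 1) :
      ‖v - ⟪u, v⟫ • u‖ ^ 2 = 1 - ⟪u, v⟫ ^ 2 := by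
    rw [norm_sub_sq_real, real_inner_smul_right, norm_smul, hu, hv, Real.norm_eq_abs,
      real_inner_comm u v]
    nlinarith [sq_abs ⟪u, v⟫]
  have hcross : ⟪h - ⟪g, h⟫ • g, g - ⟪h, g⟫ • h⟫ = -⟪g, h⟫ * (1 - ⟪g, h⟫ ^ 2) := by
    simp only [inner_sub_left, inner_sub_right, real_inner_smul_left, real_inner_smul_right,
      real_inner_self_eq_norm_sq, hg, hh, real_inner_comm g h]
    ring
  have hnorms : ‖g - ⟪h, g⟫ • h‖ = ‖h - ⟪g, h⟫ • g‖ := by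
    rw [← sq_eq_sq₀ (norm_nonneg _) (norm_nonneg _), hproj hh hg, hproj hg hh, real_inner_comm]
  have hpos : ‖h - ⟪g, h⟫ • g‖ ≠ 0 := by
    intro h0
    have := hproj hg hh
    rw [h0] at this
    linarith
  rw [luneFaceCenter, luneFaceCenter, real_inner_smul_left, real_inner_smul_right, hcross,
    hnorms, ← hproj hg hh]
  field_simp

theorem luneThickness_eq_arccos_neg_inner {g h : Esp n} (hg : ‖g‖ = 1) (hh : ‖h‖ = 1)
    (hgh : ⟪g, h⟫ ^ 2 < 1) : luneThickness g h = arccos (-⟪g, h⟫) := by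
  rw [luneThickness, sdist, inner_luneFaceCenter hg hh hgh]

theorem widthAt_le_luneThickness {C : Set (Esp n)} {k k' : Esp n} (hk' : Supports k' C)
    (hk'k : k' ≠ k) (hk'k_neg : k' ≠ -k) : widthAt C k ≤ luneThickness k k' :=
  csInf_le ⟨0, by rintro t ⟨k'', -, -, -, rfl⟩; exact arccos_nonneg _⟩ ⟨k', hk', hk'k, hk'k_neg, rfl⟩

theorem widthAt_nonneg (C : Set (Esp n)) (k : Esp n) : 0 ≤ widthAt C k :=
  Real.sInf_nonneg <| by rintro t ⟨k', -, -, -, rfl⟩; exact arccos_nonneg _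

theorem thickness_le_widthAt {C : Set (Esp n)} {k : Esp n} (hk : Supports k C) :
    thickness C ≤ widthAt C k :=
  csInf_le ⟨0, by rintro t ⟨k', -, rfl⟩; exact widthAt_nonneg C k'⟩ ⟨k, hk, rfl⟩

theorem IsSphConvexBody.isCompact {C : Set (Esp n)} (hC : IsSphConvexBody C) : IsCompact C :=
  (isCompact_sphere 0 1).of_isClosed_subset hC.1 hC.2.1.1

theorem IsSphConvexBody.exists_inner_ne_zero {C : Set (Esp n)} (hC : IsSphConvexBody C)
    {k : Esp n} (hk : k ≠ 0) : ∃ x ∈ C, ⟪k, x⟫ ≠ 0 := by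
  obtain ⟨-, ⟨hCS, -⟩, x, hxC, ε, hε, hball⟩ := hC
  rcases ne_or_eq ⟪k, x⟫ 0 with hkx | hkx
  · exact ⟨x, hxC, hkx⟩
  set u : Esp n := ‖k‖⁻¹ • k
  have hx : ‖x‖ = 1 := mem_unitSphere_iff.1 (hCS hxC)
  have hu : ‖u‖ = 1 := norm_smul_inv_norm hk
  have hxu : ⟪x, u⟫ = 0 := by rw [real_inner_smul_right, real_inner_comm, hkx, mul_zero]
  have hnear : ∀ᶠ δ in 𝓝[>] 0, greatCircle x u δ ∈ Metric.ball x ε ∧ δ < π := by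
    have hx₀ : Tendsto (greatCircle x u) (𝓝 0) (𝓝 x) := by
      simpa [greatCircle] using (continuous_greatCircle x u).tendsto 0
    exact (tendsto_nhdsWithin_of_tendsto_nhds hx₀).eventually (Metric.ball_mem_nhds x hε)
      |>.and (nhdsWithin_le_nhds (gt_mem_nhds pi_pos))
  obtain ⟨δ, ⟨hδε, hδπ⟩, hδ₀⟩ := (hnear.and self_mem_nhdsWithin).exists
  refine ⟨greatCircle x u δ, hball ⟨hδε, mem_unitSphere_iff.2 (norm_greatCircle hx hu hxu δ)⟩, ?_⟩
  rw [real_inner_comm, inner_greatCircle_left, real_inner_comm, hkx, real_inner_smul_left,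
    real_inner_self_eq_norm_sq]
  have hsin : 0 < sin δ := sin_pos_of_pos_of_lt_pi hδ₀ hδπ
  field_simp
  rw [mul_zero, zero_add]
  exact (mul_pos hsin (norm_pos_iff.2 hk)).ne'

theorem inner_greatCircle_neg_self {k p : Esp n} (hk : ‖k‖ = 1) (hkp : ⟪k, p⟫ = 0) (θ : ℝ) :
    ⟪k, greatCircle (-k) p θ⟫ = -cos θ := by
  rw [real_inner_comm, inner_greatCircle_left, inner_neg_left, real_inner_self_eq_norm_sq, hk,
    real_inner_comm, hkp]
  ring

theorem norm_greatCircle_neg {k p : Esp n} (hk : ‖k‖ = 1) (hp : ‖p‖ = 1) (hkp : ⟪k, p⟫ = 0)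
    (θ : ℝ) : ‖greatCircle (-k) p θ‖ = 1 :=
  norm_greatCircle (by rwa [norm_neg]) hp (by rw [inner_neg_left, hkp, neg_zero]) θ

theorem greatCircle_neg_ne_and_ne_neg {k p : Esp n} (hk : ‖k‖ = 1) (hkp : ⟪k, p⟫ = 0) {θ : ℝ}
    (hθ : sin θ ≠ 0) : greatCircle (-k) p θ ≠ k ∧ greatCircle (-k) p θ ≠ -k := by
  have hinner := inner_greatCircle_neg_self hk hkp θ
  have hcos : cos θ ^ 2 < 1 := by
    nlinarith [sin_sq_add_cos_sq θ, sq_pos_of_ne_zero hθ]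
  refine ⟨fun h => ?_, fun h => ?_⟩
  · rw [h, real_inner_self_eq_norm_sq, hk] at hinner
    nlinarith
  · rw [h, inner_neg_right, real_inner_self_eq_norm_sq, hk] at hinner
    nlinarith

theorem luneThickness_greatCircle_neg {k p : Esp n} (hk : ‖k‖ = 1) (hp : ‖p‖ = 1)
    (hkp : ⟪k, p⟫ = 0) {θ : ℝ} (hθ₀ : 0 < θ) (hθπ : θ < π) :
    luneThickness k (greatCircle (-k) p θ) = θ := by
  have hinner := inner_greatCircle_neg_self hk hkp θ
  have hcos : cos θ ^ 2 < 1 := by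
    nlinarith [sin_sq_add_cos_sq θ, sin_pos_of_pos_of_lt_pi hθ₀ hθπ]
  rw [luneThickness_eq_arccos_neg_inner hk (norm_greatCircle_neg hk hp hkp θ)
      (by rwa [hinner, neg_sq]), hinner, neg_neg, arccos_cos hθ₀.le hθπ.le]

theorem inner_greatCircle_sdiam_nonneg {C : Set (Esp n)} (hCS : C ⊆ unitSphere n)
    (hdiam : sdiam C ≤ π / 2) {k p : Esp n} (hk : ‖k‖ = 1) (hpC : p ∈ C) (hkp : ⟪k, p⟫ = 0)
    {x : Esp n} (hxC : x ∈ C) : 0 ≤ ⟪greatCircle (-k) p (sdiam C), x⟫ := by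
  have hpn : ‖p‖ = 1 := mem_unitSphere_iff.1 (hCS hpC)
  have hxn : ‖x‖ = 1 := mem_unitSphere_iff.1 (hCS hxC)
  have hpx : cos (sdiam C) ≤ ⟪p, x⟫ :=
    cos_le_inner_of_sdist_le hpn hxn (sdist_le_sdiam hpC hxC) (by linarith [pi_pos])
  have := inner_le_sin_of_cos_le_inner hk hpn hkp hxn (sdiam_nonneg C) hdiam hpx
  rw [inner_greatCircle_left, inner_neg_left]
  linarith

theorem Supports.exists_supports_luneThickness_le_sdiam {C : Set (Esp n)} {k : Esp n}
    (hk : Supports k C) (hC : IsSphConvexBody C) (hdiam : sdiam C ≤ π / 2) :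
    ∃ k', Supports k' C ∧ k' ≠ k ∧ k' ≠ -k ∧ luneThickness k k' ≤ sdiam C := by
  obtain ⟨hkS, hCk, p, hpC, hkp⟩ := hk
  rw [sdist_eq_pi_div_two_iff] at hkp
  have hCS : C ⊆ unitSphere n := hC.2.1.1
  have hkn : ‖k‖ = 1 := mem_unitSphere_iff.1 hkS
  have hpn : ‖p‖ = 1 := mem_unitSphere_iff.1 (hCS hpC)
  have hf : Continuous ↿fun θ (x : Esp n) => ⟪greatCircle (-k) p θ, x⟫ :=
    ((continuous_greatCircle (-k) p).comp continuous_fst).inner continuous_snd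
  have hstart : ∃ x ∈ C, ⟪greatCircle (-k) p 0, x⟫ < 0 := by
    obtain ⟨x, hxC, hkx⟩ := hC.exists_inner_ne_zero (norm_ne_zero_iff.1 (hkn ▸ one_ne_zero))
    refine ⟨x, hxC, ?_⟩
    rw [inner_greatCircle_left, cos_zero, sin_zero, inner_neg_left, one_mul, zero_mul, add_zero,
      neg_lt_zero]
    exact (sdist_le_pi_div_two_iff.1 (hCk hxC).2).lt_of_ne' hkx
  obtain ⟨θ, ⟨hθ₀, hθw⟩, q, hqC, hmin, hq⟩ := hC.isCompact.exists_mem_Ioc_isMinOn_eq_zero hf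
    (sdiam_nonneg C) hstart fun x hxC => inner_greatCircle_sdiam_nonneg hCS hdiam hkn hpC hkp hxC
  have hθπ : θ < π := by linarith [pi_pos]
  obtain ⟨hne, hne_neg⟩ :=
    greatCircle_neg_ne_and_ne_neg hkn hkp (sin_pos_of_pos_of_lt_pi hθ₀ hθπ).ne'
  refine ⟨_, ⟨mem_unitSphere_iff.2 (norm_greatCircle_neg hkn hpn hkp θ),
    fun x hxC => ⟨hCS hxC, ?_⟩, q, hqC, ?_⟩, hne, hne_neg,
    (luneThickness_greatCircle_neg hkn hpn hkp hθ₀ hθπ).trans_le hθw⟩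
  · exact sdist_le_pi_div_two_iff.2 (hq ▸ hmin hxC)
  · exact sdist_eq_pi_div_two_iff.2 hq

end SphericalGeom

theorem constWidth_of_thickness_eq_sdiam_general (d : ℕ)
    (C : Set (Esp (d + 1))) (hC : IsSphConvexBody C)
    (heq : thickness C = sdiam C) (hle : thickness C ≤ Real.pi / 2) :
    IsConstWidth C (thickness C) := by
  intro k hk
  obtain ⟨k', hk', hk'k, hk'k_neg, hlune⟩ :=
    hk.exists_supports_luneThickness_le_sdiam hC (heq ▸ hle)
  refine le_antisymm ?_ (thickness_le_widthAt hk)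
  calc widthAt C k ≤ luneThickness k k' := widthAt_le_luneThickness hk' hk'k hk'k_neg
    _ ≤ sdiam C := hlune
    _ = thickness C := heq.symm

/-- If a spherically convex body `C ⊂ S^d` satisfies
`Δ(C) = diam(C) ≤ π/2`, then `C` is of constant width `w = Δ(C) = diam(C)`. -/
theorem constWidth_of_thickness_eq_sdiam (d : ℕ) (hd : 2 ≤ d)
    (C : Set (Esp (d + 1))) (hC : IsSphConvexBody C)
    (heq : thickness C = sdiam C) (hle : thickness C ≤ Real.pi / 2) :
    IsConstWidth C (thickness C) :=
  constWidth_of_thickness_eq_sdiam_general d C hC heq hle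
end
end

section
/- Let C ⊂ S^d be a spherically convex body with diam(C) < π/2. Then every two points of C at spherical distance diam(C) are extreme points of C. -/
open scoped RealInnerProductSpace

noncomputable section

open SphericalGeom Real

/-! Let `p, q ∈ C` realize the diameter and suppose `p` is an interior point of an arc `ab` with
`a, b ∈ C`, so `p = (s a + t b) / ‖s a + t b‖` with `s, t > 0`. Both `⟪q, a⟫` and `⟪q, b⟫` are at
least `cos (diam C)`, which is positive since `diam C < π/2`; by the strict triangle inequality
`‖s a + t b‖ < s + t` this forces `⟪q, p⟫ > cos (diam C)`, i.e. `sdist p q < diam C`. -/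

namespace SphericalGeom

variable {n : ℕ}

lemma norm_eq_one_of_mem_unitSphere {x : Esp n} (hx : x ∈ unitSphere n) : ‖x‖ = 1 :=
  mem_sphere_zero_iff_norm.1 hx

lemma cos_sdist {x y : Esp n} (hx : ‖x‖ = 1) (hy : ‖y‖ = 1) : cos (sdist x y) = ⟪x, y⟫ :=
  cos_arccos (neg_one_le_real_inner_of_norm_eq_one hx hy) (real_inner_le_one_of_norm_eq_one hx hy)

lemma sdist_comm (x y : Esp n) : sdist x y = sdist y x := by
  rw [sdist, sdist, real_inner_comm]

lemma sdist_le_sdiam_s5 {C : Set (Esp n)} {x y : Esp n} (hx : x ∈ C) (hy : y ∈ C) :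
    sdist x y ≤ sdiam C :=
  le_csSup ⟨π, by rintro _ ⟨_, _, _, _, rfl⟩; exact arccos_le_pi _⟩ ⟨x, hx, y, hy, rfl⟩

lemma sdiam_le_pi (C : Set (Esp n)) : sdiam C ≤ π :=
  Real.sSup_le (by rintro _ ⟨_, _, _, _, rfl⟩; exact arccos_le_pi _) pi_pos.le

lemma cos_sdiam_le_inner {C : Set (Esp n)} (hC : C ⊆ unitSphere n) {x y : Esp n}
    (hx : x ∈ C) (hy : y ∈ C) : cos (sdiam C) ≤ ⟪x, y⟫ := by
  rw [← cos_sdist (norm_eq_one_of_mem_unitSphere (hC hx)) (norm_eq_one_of_mem_unitSphere (hC hy))]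
  exact cos_le_cos_of_nonneg_of_le_pi (arccos_nonneg _) (sdiam_le_pi C) (sdist_le_sdiam_s5 hx hy)

lemma inv_norm_smul_pos_smul {x : Esp n} (hx : ‖x‖ = 1) {s : ℝ} (hs : 0 < s) :
    ‖s • x‖⁻¹ • (s • x) = x := by
  rw [norm_smul_of_nonneg hs.le, hx, mul_one, smul_smul, inv_mul_cancel₀ hs.ne', one_smul]

lemma arc_self_subset {a : Esp n} (ha : ‖a‖ = 1) : arc a a ⊆ {a} := by
  rintro _ ⟨s, t, hs, ht, hst, rfl⟩
  rw [← add_smul] at hst ⊢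
  have hst : 0 < s + t := (add_nonneg hs ht).lt_of_ne fun h => hst (by rw [← h, zero_smul])
  exact inv_norm_smul_pos_smul ha hst

lemma exists_pos_of_mem_arc {a b z : Esp n} (ha : ‖a‖ = 1) (hb : ‖b‖ = 1) (hz : z ∈ arc a b)
    (hza : z ≠ a) (hzb : z ≠ b) :
    ∃ s t : ℝ, 0 < s ∧ 0 < t ∧ s • a + t • b ≠ 0 ∧ z = ‖s • a + t • b‖⁻¹ • (s • a + t • b) := by
  obtain ⟨s, t, hs, ht, hst, rfl⟩ := hz
  rcases hs.eq_or_lt with rfl | hs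
  · have ht : 0 < t := ht.lt_of_ne fun h => hst (by simp [← h])
    simp only [zero_smul, zero_add, inv_norm_smul_pos_smul hb ht] at hzb
    exact absurd rfl hzb
  rcases ht.eq_or_lt with rfl | ht
  · simp only [zero_smul, add_zero, inv_norm_smul_pos_smul ha hs] at hza
    exact absurd rfl hza
  exact ⟨s, t, hs, ht, hst, rfl⟩

lemma norm_smul_add_smul_lt {a b : Esp n} (ha : ‖a‖ = 1) (hb : ‖b‖ = 1) (hab : a ≠ b)
    {s t : ℝ} (hs : 0 < s) (ht : 0 < t) : ‖s • a + t • b‖ < s + t := by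
  have hray : ¬SameRay ℝ (s • a) (t • b) := fun h => hab <| by
    have h' := (h.pos_smul_left (inv_pos.2 hs)).pos_smul_right (inv_pos.2 ht)
    rw [smul_smul, smul_smul, inv_mul_cancel₀ hs.ne', inv_mul_cancel₀ ht.ne', one_smul,
      one_smul] at h'
    exact h'.eq_of_norm_eq (ha.trans hb.symm)
  calc ‖s • a + t • b‖ < ‖s • a‖ + ‖t • b‖ := norm_add_lt_of_not_sameRay hray
    _ = s + t := by rw [norm_smul_of_nonneg hs.le, norm_smul_of_nonneg ht.le, ha, hb, mul_one,
      mul_one]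

lemma lt_inner_of_mem_arc {q a b z : Esp n} {c : ℝ} (ha : ‖a‖ = 1) (hb : ‖b‖ = 1) (hc : 0 < c)
    (hqa : c ≤ ⟪q, a⟫) (hqb : c ≤ ⟪q, b⟫) (hz : z ∈ arc a b) (hza : z ≠ a) (hzb : z ≠ b) :
    c < ⟪q, z⟫ := by
  have hab : a ≠ b := by
    rintro rfl
    exact hza (arc_self_subset ha hz)
  obtain ⟨s, t, hs, ht, hst, rfl⟩ := exists_pos_of_mem_arc ha hb hz hza hzb
  have hlt := norm_smul_add_smul_lt ha hb hab hs ht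
  have hpos : 0 < ‖s • a + t • b‖ := norm_pos_iff.2 hst
  rw [real_inner_smul_right, inner_add_right, real_inner_smul_right, real_inner_smul_right,
    ← div_eq_inv_mul, lt_div_iff₀ hpos]
  calc c * ‖s • a + t • b‖ < c * (s + t) := mul_lt_mul_of_pos_left hlt hc
    _ ≤ s * ⟪q, a⟫ + t * ⟪q, b⟫ := by
      linarith [mul_le_mul_of_nonneg_left hqa hs.le, mul_le_mul_of_nonneg_left hqb ht.le]

lemma IsSphConvex.diff_singleton {C : Set (Esp n)} (hC : IsSphConvex C) {p : Esp n}
    (hp : ∀ a ∈ C, ∀ b ∈ C, a ≠ p → b ≠ p → p ∉ arc a b) : IsSphConvex (C \ {p}) := by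
  obtain ⟨hsub, hanti, harc⟩ := hC
  refine ⟨Set.sdiff_subset.trans hsub, fun x hx hnx => hanti x hx.1 hnx.1, ?_⟩
  rintro a ⟨ha, hap⟩ b ⟨hb, hbp⟩ z hz
  exact ⟨harc a ha b hb hz, fun hzp => hp a ha b hb hap hbp (hzp ▸ hz)⟩

lemma isExtremePt_of_sdist_eq_sdiam {C : Set (Esp n)} (hC : IsSphConvex C)
    (hdiam : sdiam C < π / 2) {p q : Esp n} (hp : p ∈ C) (hq : q ∈ C)
    (hpq : sdist p q = sdiam C) : IsExtremePt C p := by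
  have hcos : 0 < cos (sdiam C) :=
    cos_pos_of_mem_Ioo ⟨by linarith [pi_pos, (arccos_nonneg _).trans (sdist_le_sdiam_s5 hp hq)],
      hdiam⟩
  have hunit {x : Esp n} (hx : x ∈ C) : ‖x‖ = 1 := norm_eq_one_of_mem_unitSphere (hC.1 hx)
  refine ⟨hp, hC.diff_singleton fun a ha b hb hap hbp hpab => ?_⟩
  have hcloser : cos (sdiam C) < ⟪q, p⟫ :=
    lt_inner_of_mem_arc (hunit ha) (hunit hb) hcos (cos_sdiam_le_inner hC.1 hq ha)
      (cos_sdiam_le_inner hC.1 hq hb) hpab hap.symm hbp.symm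
  rw [← hpq, sdist_comm, cos_sdist (hunit hq) (hunit hp)] at hcloser
  exact hcloser.false

end SphericalGeom

theorem diametral_points_extreme_general (d : ℕ)
    (C : Set (Esp (d + 1))) (hC : IsSphConvexBody C)
    (hdiam : sdiam C < Real.pi / 2) :
    ∀ p ∈ C, ∀ q ∈ C, sdist p q = sdiam C →
      IsExtremePt C p ∧ IsExtremePt C q := fun p hp q hq hpq =>
  ⟨isExtremePt_of_sdist_eq_sdiam hC.2.1 hdiam hp hq hpq,
    isExtremePt_of_sdist_eq_sdiam hC.2.1 hdiam hq hp ((sdist_comm q p).trans hpq)⟩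

/-- In a spherically convex body `C ⊂ S^d` with `diam(C) < π/2`, every
two points of `C` at spherical distance `diam(C)` are extreme points of `C`. -/
theorem diametral_points_extreme (d : ℕ) (hd : 2 ≤ d)
    (C : Set (Esp (d + 1))) (hC : IsSphConvexBody C)
    (hdiam : sdiam C < Real.pi / 2) :
    ∀ p ∈ C, ∀ q ∈ C, sdist p q = sdiam C →
      IsExtremePt C p ∧ IsExtremePt C q :=
  diametral_points_extreme_general d C hC hdiam
end
end
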